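/- arXiv:1109.3851 — 3 statements merged into one kernel-verified Lean document; each statement's English description precedes it below -/
import Mathlib

section
/- Let Δ be a finite-dimensional central division algebra over a field F and let E be a finite field extension of F. Then the capacity c of the central simple E-algebra Δ ⊗_F E divides [E:F]; equivalently, [E:F] · [Δ:F] / (c · [Δ':F]) = [E:F]/c ∈ ℕ, where Δ' is the division part of Δ ⊗_F E. -/
open Polynomial TensorProduct

/-- Equation (54)-type fact: for `Δ` a finite-dimensional central division algebra over `F`
and `E/F` a finite field extension, the capacity `c` of the central simple `E`-algebra
`Δ ⊗_F E` (i.e. the matrix size in any presentation `Δ ⊗_F E ≅ Mat_c(Δ')` with `Δ'` a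
central division `E`-algebra) divides `[E : F]`. -/
theorem capacity_dvd_finrank
    (F Δ E : Type) [Field F] [DivisionRing Δ] [Algebra F Δ]
    [FiniteDimensional F Δ] [Algebra.IsCentral F Δ]
    [Field E] [Algebra F E] [FiniteDimensional F E]
    (c : ℕ) (Δ' : Type) [DivisionRing Δ'] [Algebra E Δ']
    [Algebra.IsCentral E Δ']
    (iso : (E ⊗[F] Δ) ≃ₐ[E] Matrix (Fin c) (Fin c) Δ') :
    c ∣ Module.finrank F E := by
  classical
  -- Notation
  let A := E ⊗[F] Δ
  let B := Matrix (Fin c) (Fin c) Δ'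
  let φ : Δ →+* A :=
    (Algebra.TensorProduct.includeRight : Δ →ₐ[F] E ⊗[F] Δ).toRingHom
  let ψ : Δ →+* B := iso.toRingEquiv.toRingHom.comp φ
  -- `A` and `B` as left `Δ`-modules via left multiplication
  letI mA : Module Δ A := Module.compHom A φ
  letI mB : Module Δ B := Module.compHom B ψ
  have hA : ∀ (d : Δ) (x : A), d • x = φ d * x := fun _ _ => rfl
  have hB : ∀ (d : Δ) (x : B), d • x = ψ d * x := fun _ _ => rfl
  -- the natural `F`-module structure on `A` is compatible
  letI : IsScalarTower F Δ A := ⟨fun f d x => by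
    rw [hA, hA, Algebra.smul_def f d, map_mul, mul_assoc]
    congr 1
    rw [show (φ (algebraMap F Δ f) : A) = algebraMap F A f from
      ((Algebra.TensorProduct.includeRight : Δ →ₐ[F] E ⊗[F] Δ).commutes f).symm ▸ rfl]
    exact (Algebra.smul_def f (φ d * x)).symm⟩
  haveI : Module.Finite Δ A := Module.Finite.of_restrictScalars_finite F Δ A
  -- `finrank Δ A = [E : F]`
  have hΔpos : 0 < Module.finrank F Δ := Module.finrank_pos
  have h1 : Module.finrank F Δ * Module.finrank Δ A
      = Module.finrank F Δ * Module.finrank F E := by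
    rw [Module.finrank_mul_finrank F Δ A]
    rw [show Module.finrank F A = Module.finrank F E * Module.finrank F Δ from
      Module.finrank_tensorProduct]
    ring
  have hAE : Module.finrank Δ A = Module.finrank F E :=
    Nat.eq_of_mul_eq_mul_left hΔpos h1
  -- `A ≃ B` as `Δ`-modules
  let eΔ : A ≃ₗ[Δ] B :=
    { iso.toRingEquiv.toAddEquiv with
      map_smul' := fun d x => by
        show iso (φ d * x) = ψ d * iso x
        rw [map_mul]
        rfl }
  have hAB : Module.finrank Δ A = Module.finrank Δ B := LinearEquiv.finrank_eq eΔ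
  -- the column space as a `Δ`-module
  letI mV : Module Δ (Fin c → Δ') :=
    { smul := fun d v => (ψ d).mulVec v
      one_smul := fun v => by
        show (ψ 1).mulVec v = v
        rw [map_one, Matrix.one_mulVec]
      mul_smul := fun d e v => by
        show (ψ (d * e)).mulVec v = (ψ d).mulVec ((ψ e).mulVec v)
        rw [map_mul, Matrix.mulVec_mulVec]
      smul_add := fun d v w => by
        show (ψ d).mulVec (v + w) = (ψ d).mulVec v + (ψ d).mulVec w
        rw [Matrix.mulVec_add]
      smul_zero := fun d => by
        show (ψ d).mulVec 0 = 0
        rw [Matrix.mulVec_zero]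
      add_smul := fun d e v => by
        show (ψ (d + e)).mulVec v = (ψ d).mulVec v + (ψ e).mulVec v
        rw [map_add, Matrix.add_mulVec]
      zero_smul := fun v => by
        show (ψ 0).mulVec v = 0
        rw [map_zero, Matrix.zero_mulVec] }
  have hV : ∀ (d : Δ) (v : Fin c → Δ'), d • v = (ψ d).mulVec v := fun _ _ => rfl
  -- `B` is the direct sum of its `c` columns
  let col : B ≃ₗ[Δ] (Fin c → (Fin c → Δ')) :=
    { toFun := fun M j i => M i j
      invFun := fun v i j => v j i
      left_inv := fun M => rfl
      right_inv := fun v => rfl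
      map_add' := fun M N => rfl
      map_smul' := fun d M => by
        funext j i
        show (ψ d * M) i j = (ψ d).mulVec (fun k => M k j) i
        rw [Matrix.mul_apply]
        simp [Matrix.mulVec, dotProduct] }
  have hBV : Module.finrank Δ B = Module.finrank Δ (Fin c → (Fin c → Δ')) :=
    LinearEquiv.finrank_eq col
  -- finish, splitting on whether `c = 0`
  rcases Nat.eq_zero_or_pos c with hc | hc
  · subst hc
    haveI : Subsingleton B := by
      constructor
      intro a b
      funext i
      exact absurd i.2 (by simp)
    have : Module.finrank F E = 0 := by
      rw [← hAE, hAB, Module.finrank_zero_of_subsingleton]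
    rw [this]
  · haveI : Module.Finite Δ (Fin c → (Fin c → Δ')) :=
      by
      haveI : Module.Finite Δ B := Module.Finite.equiv eΔ
      exact Module.Finite.equiv col
    haveI : Module.Finite Δ (Fin c → Δ') := by
      refine Module.Finite.of_surjective
        (LinearMap.proj (R := Δ) (φ := fun _ : Fin c => Fin c → Δ') ⟨0, hc⟩) ?_
      intro v
      exact ⟨fun _ => v, rfl⟩
    have hpi : Module.finrank Δ (Fin c → (Fin c → Δ'))
        = c * Module.finrank Δ (Fin c → Δ') := by
      rw [Module.finrank_pi_fintype, Finset.sum_const, Finset.card_univ, Fintype.card_fin,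
        smul_eq_mul]
    exact ⟨Module.finrank Δ (Fin c → Δ'), by rw [← hAE, hAB, hBV, hpi]⟩
end

section
/- Let F be a field, p(t) ∈ F[t] a monic irreducible separable polynomial, e ≥ 1 an integer, and E := F[t]/(p(t)). Then there is an F-algebra isomorphism F[t]/(p(t)^e) ≅ E[ε]/(ε^e). More precisely, the natural projection π : F[t]/(p(t)^e) → E admits an F-algebra section s : E → F[t]/(p(t)^e) with π ∘ s = id_E, and for any generator ε of the maximal ideal of F[t]/(p(t)^e) one has F[t]/(p(t)^e) = s(E)[ε]/(ε^e). -/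
/-!
In `A = F[t]/(p^e)` the class of `t` is a root of `p` up to the nilpotent `p(t)`, and `p'(t)` is a
unit because `p` is separable, so Newton's iteration moves `t` to a genuine root `y` of `p` with
`y - t` nilpotent. Then `t ↦ y` defines `s : E → A`, and `π (s t) = t` because roots of a separable
polynomial are unique modulo nilpotents. As `ker π = (ε)` with `ε` nilpotent, successive
approximation gives `A = s(E)[ε]`; the surjection `E[X]/(X^e) → A`, `X ↦ ε`, is then bijective
since its source has `F`-dimension at most `deg p * e = dim_F A`.
-/

open Polynomial

namespace Polynomial

variable {R A : Type*} [CommRing R] [CommRing A] [Algebra R A] {P : R[X]}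

theorem Separable.isUnit_aeval_derivative_of_isNilpotent (hP : P.Separable) {x : A}
    (hx : IsNilpotent (aeval x P)) : IsUnit (aeval x (derivative P)) := by
  obtain ⟨a, b, hab⟩ := hP
  have h : aeval x b * aeval x (derivative P) = 1 - aeval x a * aeval x P := by
    simpa [eq_sub_iff_add_eq, add_comm] using congr_arg (aeval x) hab
  exact isUnit_of_mul_isUnit_right
    (h ▸ ((Commute.all _ _).isNilpotent_mul_left hx).isUnit_one_sub)

theorem Separable.exists_isNilpotent_sub_aeval_eq_zero (hP : P.Separable) {x : A}
    (hx : IsNilpotent (aeval x P)) : ∃ y, IsNilpotent (x - y) ∧ aeval y P = 0 :=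
  (existsUnique_nilpotent_sub_and_aeval_eq_zero hx
    (hP.isUnit_aeval_derivative_of_isNilpotent hx)).exists

theorem Separable.eq_of_isNilpotent_sub (hP : P.Separable) {x y : A} (hx : aeval x P = 0)
    (hy : aeval y P = 0) (hxy : IsNilpotent (x - y)) : x = y :=
  (existsUnique_nilpotent_sub_and_aeval_eq_zero (by simp [hx])
    (hP.isUnit_aeval_derivative_of_isNilpotent (by simp [hx]))).unique
    ⟨by simp, hx⟩ ⟨hxy, hy⟩

end Polynomial

theorem Subalgebra.eq_top_of_isNilpotent_of_forall_exists_sub_mem_span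
    {R A : Type*} [CommSemiring R] [CommRing A] [Algebra R A] (S : Subalgebra R A) {ε : A}
    (hεS : ε ∈ S) (hε : IsNilpotent ε) (h : ∀ a, ∃ b ∈ S, a - b ∈ Ideal.span {ε}) :
    S = ⊤ := by
  have approx : ∀ n a, ∃ b ∈ S, a - b ∈ Ideal.span {ε ^ n} := by
    intro n
    induction n with
    | zero => exact fun a ↦ ⟨0, zero_mem S, by simp⟩
    | succ n ih =>
      intro a
      obtain ⟨b, hb, hab⟩ := ih a
      obtain ⟨d, hd⟩ := Ideal.mem_span_singleton'.1 hab
      obtain ⟨b', hb', hdb'⟩ := h d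
      obtain ⟨d', hd'⟩ := Ideal.mem_span_singleton'.1 hdb'
      refine ⟨b + b' * ε ^ n, add_mem hb (mul_mem hb' (pow_mem hεS n)),
        Ideal.mem_span_singleton'.2 ⟨d', ?_⟩⟩
      linear_combination ε ^ n * hd' + hd
  obtain ⟨n, hn⟩ := hε
  refine eq_top_iff.2 fun a _ ↦ ?_
  obtain ⟨b, hb, hab⟩ := approx n a
  rw [hn, Ideal.span_singleton_eq_bot.2 rfl, Ideal.mem_bot, sub_eq_zero] at hab
  exact hab ▸ hb

theorem Algebra.adjoin_insert_range_eq_top_of_ker_eq_span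
    {R A B : Type*} [CommSemiring R] [CommRing A] [Ring B] [Algebra R A] [Algebra R B]
    {π : A →ₐ[R] B} {s : B →ₐ[R] A} (hs : π.comp s = AlgHom.id R B) {ε : A}
    (hε : IsNilpotent ε) (hker : RingHom.ker π = Ideal.span {ε}) :
    Algebra.adjoin R (insert ε (Set.range s)) = ⊤ := by
  refine Subalgebra.eq_top_of_isNilpotent_of_forall_exists_sub_mem_span _
    (Algebra.subset_adjoin (Set.mem_insert _ _)) hε fun a ↦
    ⟨s (π a), Algebra.subset_adjoin (Set.mem_insert_of_mem _ ⟨_, rfl⟩), ?_⟩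
  rw [← hker, RingHom.mem_ker, map_sub, ← AlgHom.comp_apply, hs, AlgHom.id_apply, sub_self]

namespace AdjoinRoot

variable {R : Type*} [CommRing R]

theorem algHomOfDvd_mk {f g : R[X]} (hgf : g ∣ f) (q : R[X]) :
    algHomOfDvd R f g hgf (mk f q) = mk g q := by
  rw [← aeval_eq, ← aeval_algHom_apply, algHomOfDvd_root, aeval_eq]

theorem ker_algHomOfDvd {f g : R[X]} (hgf : g ∣ f) :
    RingHom.ker (algHomOfDvd R f g hgf) = Ideal.span {mk f g} := by
  ext z
  obtain ⟨q, rfl⟩ := mk_surjective z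
  rw [RingHom.mem_ker, algHomOfDvd_mk, mk_eq_zero, Ideal.mem_span_singleton]
  constructor
  · rintro ⟨r, rfl⟩
    exact ⟨mk f r, map_mul _ _ _⟩
  · rintro ⟨w, hw⟩
    obtain ⟨r, rfl⟩ := mk_surjective w
    rw [← map_mul, mk_eq_mk] at hw
    simpa using (hgf.trans hw).add (dvd_mul_right g r)

theorem mk_self_pow_eq_zero (p : R[X]) (e : ℕ) : mk (p ^ e) p ^ e = 0 := by
  rw [← map_pow, mk_self]

theorem exists_algHomOfDvd_comp_eq_id {p : R[X]} (hp : p.Separable) {e : ℕ} (he : e ≠ 0) :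
    ∃ s : AdjoinRoot p →ₐ[R] AdjoinRoot (p ^ e),
      (algHomOfDvd R (p ^ e) p (dvd_pow_self p he)).comp s = AlgHom.id R _ := by
  set π := algHomOfDvd R (p ^ e) p (dvd_pow_self p he)
  obtain ⟨y, hxy, hy⟩ := hp.exists_isNilpotent_sub_aeval_eq_zero (x := root (p ^ e))
    ⟨e, by rw [aeval_eq, mk_self_pow_eq_zero]⟩
  refine ⟨liftAlgHom p (Algebra.ofId R _) y (by rwa [Algebra.toRingHom_ofId, ← aeval_def]),
    algHom_ext ?_⟩
  have hπy : root p = π y := hp.eq_of_isNilpotent_sub ((aeval_eq p).trans mk_self)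
    (by rw [aeval_algHom_apply, hy, map_zero]) (by simpa [π] using hxy.map π)
  rw [AlgHom.comp_apply, liftAlgHom_root, AlgHom.id_apply, hπy]

end AdjoinRoot

theorem nonempty_algEquiv_quotient_span_X_pow {F E A : Type*} [Field F] [CommRing E]
    [CommRing A] [Algebra F E] [Algebra F A] [FiniteDimensional F E] [FiniteDimensional F A]
    (s : E →ₐ[F] A) {c : A} {e : ℕ} (hc : c ^ e = 0)
    (hgen : Algebra.adjoin F (insert c (Set.range s)) = ⊤)
    (hdim : Module.finrank F E * e ≤ Module.finrank F A) :
    Nonempty (A ≃ₐ[F] E[X] ⧸ Ideal.span {(X : E[X]) ^ e}) := by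
  let := s.toAlgebra
  have : IsScalarTower F E A := .of_algebraMap_eq fun z ↦ (s.commutes z).symm
  let Φ : AdjoinRoot ((X : E[X]) ^ e) →ₐ[F] A :=
    (AdjoinRoot.liftAlgHom _ (Algebra.ofId E A) c (by simpa using hc)).restrictScalars F
  have hsurj : Function.Surjective Φ := by
    rw [← AlgHom.range_eq_top, eq_top_iff, ← hgen, Algebra.adjoin_le_iff,
      Set.insert_subset_iff, Set.range_subset_iff]
    exact ⟨⟨AdjoinRoot.root _, by simp [Φ]⟩,
      fun z ↦ ⟨AdjoinRoot.of _ z, by simp [Φ, RingHom.algebraMap_toAlgebra]⟩⟩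
  let b := (Module.Free.chooseBasis F E).smulTower
    (AdjoinRoot.powerBasis' (monic_X_pow (R := E) e)).basis
  have := Module.Finite.of_basis b
  have hle : Module.finrank F (AdjoinRoot ((X : E[X]) ^ e)) ≤ Module.finrank F A := by
    rw [Module.finrank_eq_card_basis b, Fintype.card_prod, Fintype.card_fin,
      ← Module.finrank_eq_card_chooseBasisIndex]
    exact (Nat.mul_le_mul_left _ (natDegree_X_pow_le e)).trans hdim
  have hinj : Function.Injective Φ :=
    (LinearMap.injective_iff_surjective_of_finrank_eq_finrank
      (hle.antisymm (LinearMap.finrank_le_finrank_of_surjective (f := Φ.toLinearMap) hsurj))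
      (f := Φ.toLinearMap)).2 hsurj
  exact ⟨(AlgEquiv.ofBijective Φ ⟨hinj, hsurj⟩).symm⟩

/-- Cohen-type structure of `F[t]/(p^e)` for `p` monic irreducible separable and `e ≥ 1`,
with `E := F[t]/(p)`:
there is an `F`-algebra isomorphism `F[t]/(p^e) ≅ E[ε]/(ε^e)`; more precisely, the natural
projection `π : F[t]/(p^e) → E` admits an `F`-algebra section `s : E → F[t]/(p^e)` with
`π ∘ s = id`, and for every generator `ε` of the maximal ideal of `F[t]/(p^e)` (i.e. of the
ideal generated by the image of `p`) one has `ε^e = 0` and `F[t]/(p^e) = s(E)[ε]`. -/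
theorem adjoinRoot_pow_structure
    (F : Type) [Field F] (p : Polynomial F)
    (hmonic : p.Monic) (hsep : p.Separable)
    (e : ℕ) (he : 1 ≤ e) :
    Nonempty (AdjoinRoot (p ^ e) ≃ₐ[F]
        (Polynomial (AdjoinRoot p) ⧸
          Ideal.span {(Polynomial.X : Polynomial (AdjoinRoot p)) ^ e})) ∧
    ∃ s : AdjoinRoot p →ₐ[F] AdjoinRoot (p ^ e),
      (AdjoinRoot.liftAlgHom (p ^ e) (Algebra.ofId F (AdjoinRoot p)) (AdjoinRoot.root p)
          (by
            change Polynomial.aeval (AdjoinRoot.root p) (p ^ e) = 0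
            rw [map_pow, AdjoinRoot.aeval_eq, AdjoinRoot.mk_self]
            exact zero_pow (by omega))).comp s = AlgHom.id F (AdjoinRoot p) ∧
      ∀ ε : AdjoinRoot (p ^ e),
        Ideal.span {ε} = Ideal.span {AdjoinRoot.mk (p ^ e) p} →
          ε ^ e = 0 ∧ Algebra.adjoin F (insert ε (Set.range s)) = ⊤ := by
  obtain ⟨s, hs⟩ := AdjoinRoot.exists_algHomOfDvd_comp_eq_id hsep (by omega : e ≠ 0)
  have hgen : ∀ ε : AdjoinRoot (p ^ e), Ideal.span {ε} = Ideal.span {AdjoinRoot.mk (p ^ e) p} →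
      ε ^ e = 0 ∧ Algebra.adjoin F (insert ε (Set.range s)) = ⊤ := by
    intro ε hε
    obtain ⟨d, rfl⟩ := Ideal.mem_span_singleton.1 (hε ▸ Ideal.mem_span_singleton_self ε)
    have hεe : (AdjoinRoot.mk (p ^ e) p * d) ^ e = 0 := by
      rw [mul_pow, AdjoinRoot.mk_self_pow_eq_zero, zero_mul]
    exact ⟨hεe, Algebra.adjoin_insert_range_eq_top_of_ker_eq_span hs ⟨e, hεe⟩
      ((AdjoinRoot.ker_algHomOfDvd _).trans hε.symm)⟩
  have := (AdjoinRoot.powerBasis' hmonic).finite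
  have := (AdjoinRoot.powerBasis' (hmonic.pow e)).finite
  refine ⟨nonempty_algEquiv_quotient_span_X_pow s (hgen _ rfl).1 (hgen _ rfl).2 ?_, s, hs, hgen⟩
  rw [(AdjoinRoot.powerBasis' hmonic).finrank, (AdjoinRoot.powerBasis' (hmonic.pow e)).finrank]
  exact (mul_comm _ _).trans_le (natDegree_pow p e).ge
end

section
/- Let Δ be a finite-dimensional central division algebra over a field F, V a finite-dimensional right Δ-vector space, and E = F[t]/(p(t)) a finite field extension of F with Δ ⊗_F E ≅ Mat_c(Δ') for a central division E-algebra Δ'. Then an F-algebra embedding of E into End_Δ(V) exists if and only if V admits the structure of a right Δ ⊗_F E-module extending its Δ-module structure, and this holds if and only if dim_F V / (c · [Δ' : F]) is a positive integer; equivalently, [E:F] divides n·c, where n = dim_Δ V. -/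
/-!
An `F`-algebra map `E → End_Δ(V)` is the same as an `E`-action on `V` commuting with `Δ`,
i.e. an action of `E ⊗_F Δ ≅ Mat_c(Δ')` extending that of `Δ`; since `E` is a field and
`V ≠ 0`, such a map is automatically injective. By the Morita equivalence between `Δ'` and
`Mat_c(Δ')`, every `Mat_c(Δ')`-module is `Wᶜ` for a `Δ'`-vector space `W`, so its
`F`-dimension is a multiple of `c · [Δ' : F]`; conversely `(Δ'ᶜ)ᵏ` realises every such
multiple, and as a `Δ`-module `V` is determined up to isomorphism by its `F`-dimension, so
the action can be transported to `V`. The last equivalence is the count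
`[E : F] · [Δ : F] = c² · [Δ' : F]`, `dim_F V = n · [Δ : F]`.
-/

open Module TensorProduct

theorem AlgHom.isScalarTower_iff {R A B M : Type*} [CommSemiring R] [Semiring A] [Algebra R A]
    [Semiring B] [Algebra R B] [AddCommMonoid M] [Module R M] [Module A M] [Module B M]
    (f : B →ₐ[R] A) (h : ∀ (b : B) (m : M), f b • m = b • m) :
    IsScalarTower R A M ↔ IsScalarTower R B M :=
  ⟨fun _ => .of_algebraMap_smul fun r m => by rw [← h, f.commutes, algebraMap_smul],
    fun _ => .of_algebraMap_smul fun r m => by rw [← f.commutes, h, algebraMap_smul]⟩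

theorem nonempty_algHom_end_iff_exists_module_tensorProduct {F A B V : Type*}
    [CommSemiring F] [Semiring A] [Algebra F A] [Semiring B] [Algebra F B]
    [AddCommMonoid V] [Module F V] [Module B V] [IsScalarTower F B V] :
    Nonempty (A →ₐ[F] Module.End B V) ↔
      ∃ inst : Module (A ⊗[F] B) V, ∀ (b : B) (v : V),
        (letI := inst; ((1 : A) ⊗ₜ[F] b) • v) = b • v := by
  constructor
  · rintro ⟨ρ⟩
    let _ : Module A V := Module.compHom V (ρ : A →+* Module.End B V)
    have : IsScalarTower F A V := .of_algebraMap_smul fun r v => by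
      change ρ (algebraMap F A r) v = r • v
      rw [ρ.commutes, Module.algebraMap_end_apply]
    have : SMulCommClass A B V := ⟨fun a b v => (ρ a).map_smul b v⟩
    exact ⟨TensorProduct.Algebra.module, fun b v => one_smul A (b • v)⟩
  · rintro ⟨inst, hB⟩
    have := (Algebra.TensorProduct.includeRight.isScalarTower_iff hB).mpr ‹_›
    let inclA : A →ₐ[F] A ⊗[F] B := Algebra.TensorProduct.includeLeft
    let _ : Module A V := Module.compHom V inclA.toRingHom
    have : IsScalarTower F A V := (inclA.isScalarTower_iff fun _ _ => rfl).mp ‹_›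
    have : SMulCommClass A B V := ⟨fun a b v => by
      change (a ⊗ₜ[F] (1 : B)) • b • v = b • (a ⊗ₜ[F] (1 : B)) • v
      simp only [← hB, ← mul_smul, Algebra.TensorProduct.tmul_mul_tmul, mul_one, one_mul]⟩
    exact ⟨Algebra.lsmul F B V⟩

theorem Module.finrank_pi_const {R M ι : Type*} [Ring R] [StrongRankCondition R]
    [AddCommGroup M] [Module R M] [Module.Free R M] [Fintype ι] :
    finrank R (ι → M) = Fintype.card ι * finrank R M := by
  simp [finrank]

open Matrix.Module in
theorem card_mul_finrank_dvd_finrank_of_matrix_module {K D M n : Type*} [Field K]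
    [DivisionRing D] [Algebra K D] [Fintype n] [DecidableEq n] [AddCommGroup M] [Module K M]
    [Module (Matrix n n D) M] [IsScalarTower K (Matrix n n D) M] :
    Fintype.card n * finrank K D ∣ finrank K M := by
  rcases isEmpty_or_nonempty n with _ | ⟨⟨j⟩⟩
  · have := Module.subsingleton (Matrix n n D) M
    simp [finrank_zero_of_subsingleton]
  let _ : Module D M := Module.compHom M (Matrix.scalar n : D →+* Matrix n n D)
  have := MatrixModCat.isScalarTower_toModuleCat D (ModuleCat.of (Matrix n n D) M)
  have : IsScalarTower K D M :=
    .of_algebraMap_smul fun r m => algebraMap_smul (Matrix n n D) r m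
  -- Morita: `M ≅ Wⁿ` for `W` the image of the matrix unit `E_jj`
  let W := MatrixModCat.toModuleCatObj D M j
  let e : M ≃ₗ[Matrix n n D] (n → W) :=
    toModuleCatFromModuleCatLinearEquiv D (ModuleCat.of (Matrix n n D) M) j
  refine ⟨finrank D W, ?_⟩
  rw [(e.restrictScalars K).finrank_eq, finrank_pi_const, ← finrank_mul_finrank K D W, mul_assoc]

theorem exists_module_of_finrank_eq {F Δ A N V : Type*} [Field F] [DivisionRing Δ]
    [Algebra F Δ] [FiniteDimensional F Δ] [Ring A] [Algebra F A] (f : Δ →ₐ[F] A)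
    [AddCommGroup N] [Module F N] [Module A N] [IsScalarTower F A N] [FiniteDimensional F N]
    [AddCommGroup V] [Module F V] [Module Δ V] [IsScalarTower F Δ V] [FiniteDimensional F V]
    (h : finrank F N = finrank F V) :
    ∃ inst : Module A V, ∀ (δ : Δ) (v : V), (letI := inst; f δ • v) = δ • v := by
  let _ : Module Δ N := Module.compHom N f.toRingHom
  have : IsScalarTower F Δ N := (f.isScalarTower_iff fun _ _ => rfl).mp ‹_›
  have : FiniteDimensional Δ N := .of_restrictScalars_finite F Δ N
  have : FiniteDimensional Δ V := .of_restrictScalars_finite F Δ V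
  have hΔ : finrank Δ N = finrank Δ V := by
    refine Nat.eq_of_mul_eq_mul_left (finrank_pos (R := F) (M := Δ)) ?_
    rw [finrank_mul_finrank, finrank_mul_finrank, h]
  let e : N ≃ₗ[Δ] V := LinearEquiv.ofFinrankEq N V hΔ
  refine ⟨e.symm.toAddEquiv.module A, fun δ v => ?_⟩
  change e (f δ • e.symm v) = δ • v
  rw [show f δ • e.symm v = δ • e.symm v from rfl, e.map_smul, e.apply_symm_apply]

theorem exists_module_iff_card_mul_finrank_dvd {F Δ A D V n : Type*} [Field F]
    [DivisionRing Δ] [Algebra F Δ] [FiniteDimensional F Δ] [Ring A] [Algebra F A]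
    [DivisionRing D] [Algebra F D] [FiniteDimensional F D] [Fintype n] [DecidableEq n]
    (e : A ≃ₐ[F] Matrix n n D) (f : Δ →ₐ[F] A)
    [AddCommGroup V] [Module F V] [Module Δ V] [IsScalarTower F Δ V] [FiniteDimensional F V] :
    (∃ inst : Module A V, ∀ (δ : Δ) (v : V), (letI := inst; f δ • v) = δ • v) ↔
      Fintype.card n * finrank F D ∣ finrank F V := by
  constructor
  · rintro ⟨inst, hf⟩
    have : IsScalarTower F A V := (f.isScalarTower_iff hf).mpr ‹_›
    let _ : Module (Matrix n n D) V := Module.compHom V e.symm.toRingHom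
    have : IsScalarTower F (Matrix n n D) V :=
      ((e.symm : Matrix n n D →ₐ[F] A).isScalarTower_iff fun _ _ => rfl).mp ‹_›
    exact card_mul_finrank_dvd_finrank_of_matrix_module
  · rintro ⟨k, hk⟩
    obtain ⟨inst, hf⟩ := exists_module_of_finrank_eq ((e : A →ₐ[F] Matrix n n D).comp f)
      (N := Fin k → n → D) (V := V) (by simp [finrank_pi_const, hk, mul_comm])
    exact ⟨Module.compHom V e.toRingHom, hf⟩

theorem Nat.exists_pos_mul_eq_iff_dvd {a b : ℕ} (ha : 0 < a) :
    (∃ k, 0 < k ∧ a = k * b) ↔ b ∣ a := by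
  refine ⟨fun ⟨k, _, hk⟩ => ⟨k, hk.trans (mul_comm k b)⟩,
    fun ⟨k, hk⟩ => ⟨k, Nat.pos_of_ne_zero ?_, hk.trans (mul_comm b k)⟩⟩
  rintro rfl
  simp [hk] at ha

theorem Nat.mul_dvd_mul_iff_of_mul_eq {e d c d' n : ℕ} (hd : 0 < d) (hc : 0 < c)
    (h : e * d = c * (c * d')) : c * d' ∣ d * n ↔ e ∣ n * c :=
  calc c * d' ∣ d * n ↔ c * (c * d') ∣ c * (d * n) := (Nat.mul_dvd_mul_iff_left hc).symm
    _ ↔ e * d ∣ n * c * d := by rw [h, show c * (d * n) = n * c * d by ring]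
    _ ↔ e ∣ n * c := Nat.mul_dvd_mul_iff_right hd

theorem embedding_iff_module_iff_dim_dvd_general
    (F Δ V E : Type) [Field F] [DivisionRing Δ] [Algebra F Δ]
    [FiniteDimensional F Δ]
    [AddCommGroup V] [Module Δ V] [Module F V] [IsScalarTower F Δ V]
    [FiniteDimensional Δ V]
    [Field E] [Algebra F E] [FiniteDimensional F E]
    (n : ℕ) (hn : n = Module.finrank Δ V) (hnpos : 0 < n)
    (c : ℕ) (Δ' : Type) [DivisionRing Δ'] [Algebra E Δ']
    [Algebra F Δ'] [IsScalarTower F E Δ']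
    (iso : (E ⊗[F] Δ) ≃ₐ[E] Matrix (Fin c) (Fin c) Δ') :
    ((∃ ρ : E →ₐ[F] Module.End Δ V, Function.Injective ρ) ↔
        (∃ inst : Module (E ⊗[F] Δ) V, ∀ (δ : Δ) (v : V),
          (letI := inst; ((1 : E) ⊗ₜ[F] δ) • v) = δ • v)) ∧
    ((∃ inst : Module (E ⊗[F] Δ) V, ∀ (δ : Δ) (v : V),
          (letI := inst; ((1 : E) ⊗ₜ[F] δ) • v) = δ • v) ↔
        (∃ k : ℕ, 0 < k ∧ Module.finrank F V = k * (c * Module.finrank F Δ'))) ∧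
    ((∃ k : ℕ, 0 < k ∧ Module.finrank F V = k * (c * Module.finrank F Δ')) ↔
        Module.finrank F E ∣ n * c) := by
  have : Nontrivial V := finrank_pos_iff.mp (hn ▸ hnpos)
  have : FiniteDimensional F V := Module.Finite.trans Δ V
  have hV : finrank F V = finrank F Δ * n := by rw [hn, finrank_mul_finrank]
  have hdim : finrank F E * finrank F Δ = c * (c * finrank F Δ') := by
    rw [← finrank_tensorProduct, (iso.restrictScalars F).toLinearEquiv.finrank_eq,
      finrank_matrix, Fintype.card_fin, mul_assoc]
  obtain ⟨hc, -, hΔ'⟩ : 0 < c ∧ 0 < c ∧ 0 < finrank F Δ' := by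
    simpa only [hdim, CanonicallyOrderedAdd.mul_pos] using
      Nat.mul_pos (finrank_pos (R := F) (M := E)) (finrank_pos (R := F) (M := Δ))
  have : FiniteDimensional F Δ' := Module.finite_of_finrank_pos hΔ'
  have hk := Nat.exists_pos_mul_eq_iff_dvd (b := c * finrank F Δ') (finrank_pos (R := F) (M := V))
  refine ⟨?_, ?_, hk.trans ?_⟩
  · rw [← nonempty_algHom_end_iff_exists_module_tensorProduct]
    exact ⟨fun ⟨ρ, _⟩ => ⟨ρ⟩, fun ⟨ρ⟩ => ⟨ρ, ρ.toRingHom.injective⟩⟩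
  · refine (exists_module_iff_card_mul_finrank_dvd (iso.restrictScalars F)
      Algebra.TensorProduct.includeRight).trans ?_
    rw [hk, Fintype.card_fin]
  · rw [hV]
    exact Nat.mul_dvd_mul_iff_of_mul_eq finrank_pos hc hdim

/-- Proof of Lemma 7, in detail: let `Δ` be a finite-dimensional central division
`F`-algebra, `V` a finite-dimensional `Δ`-vector space of dimension `n ≥ 1`, `E/F` a finite
field extension, and `E ⊗_F Δ ≅ Mat_c(Δ')` with `Δ'` a central division `E`-algebra (so `c`
is the capacity). Then the following are equivalent:
an `F`-algebra embedding of `E` into `End_Δ(V)` exists; `V` admits an `(E ⊗_F Δ)`-module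
structure extending its `Δ`-module structure; `dim_F V / (c · [Δ' : F])` is a positive
integer; and `[E : F] ∣ n · c`. -/
theorem embedding_iff_module_iff_dim_dvd
    (F Δ V E : Type) [Field F] [DivisionRing Δ] [Algebra F Δ]
    [FiniteDimensional F Δ] [Algebra.IsCentral F Δ]
    [AddCommGroup V] [Module Δ V] [Module F V] [IsScalarTower F Δ V]
    [SMulCommClass Δ F V] [FiniteDimensional Δ V]
    [Field E] [Algebra F E] [FiniteDimensional F E]
    (n : ℕ) (hn : n = Module.finrank Δ V) (hnpos : 0 < n)
    (c : ℕ) (Δ' : Type) [DivisionRing Δ'] [Algebra E Δ'] [Algebra.IsCentral E Δ']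
    [Algebra F Δ'] [IsScalarTower F E Δ']
    (iso : (E ⊗[F] Δ) ≃ₐ[E] Matrix (Fin c) (Fin c) Δ') :
    ((∃ ρ : E →ₐ[F] Module.End Δ V, Function.Injective ρ) ↔
        (∃ inst : Module (E ⊗[F] Δ) V, ∀ (δ : Δ) (v : V),
          (letI := inst; ((1 : E) ⊗ₜ[F] δ) • v) = δ • v)) ∧
    ((∃ inst : Module (E ⊗[F] Δ) V, ∀ (δ : Δ) (v : V),
          (letI := inst; ((1 : E) ⊗ₜ[F] δ) • v) = δ • v) ↔
        (∃ k : ℕ, 0 < k ∧ Module.finrank F V = k * (c * Module.finrank F Δ'))) ∧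
    ((∃ k : ℕ, 0 < k ∧ Module.finrank F V = k * (c * Module.finrank F Δ')) ↔
        Module.finrank F E ∣ n * c) :=
  embedding_iff_module_iff_dim_dvd_general F Δ V E n hn hnpos c Δ' iso
end
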